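/- For all integers n > m ≥ 1, 3^{n−m}·ln pc(m) + 3·(3^{n−m}−1)·ln 2 < ln pc(n) < ln pd(n) < 3^{n−m}·ln pd(m) + 3·(3^{n−m}−1)·ln 2 (natural logarithms of the positive integers pc(m), pd(m), pc(n), pd(n)). -/

import Mathlib

/-- One step of the recursion for the ice-model boundary counts
`(pa, pb, pc, pd)` on the Sierpinski gasket `SG(n)`. -/
def iceStep : ℕ × ℕ × ℕ × ℕ → ℕ × ℕ × ℕ × ℕ
  | (a, b, c, d) =>
    ((a + b) ^ 2 * (a + 3 * c + d),
     (a + b) ^ 2 * (b + 3 * c + d),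
     a ^ 2 * b + b ^ 2 * a + (3 * c + d) ^ 3,
     a ^ 3 + b ^ 3 + (3 * c + d) ^ 3)

/-- The quadruple `(pa(n), pb(n), pc(n), pd(n))`. -/
def iceSeq : ℕ → ℕ × ℕ × ℕ × ℕ
  | 0 => (0, 1, 0, 1)
  | n + 1 => iceStep (iceSeq n)

def pa (n : ℕ) : ℕ := (iceSeq n).1
def pb (n : ℕ) : ℕ := (iceSeq n).2.1
def pc (n : ℕ) : ℕ := (iceSeq n).2.2.1
def pd (n : ℕ) : ℕ := (iceSeq n).2.2.2

/-!
Write `s = pa + pb`, `r = pb - pa` and `t = 3 pc + pd`. One step of the recursion maps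
`(s, t, r)` to `(s²(s + 2t), s³ + 4t³, s²r)`, and `pd (n+1) = pc (n+1) + s r²`.

Lower bound: `pc ≤ pd` gives `pc (n+1) > (3 pc + pd)³ ≥ (4 pc)³`.
Upper bound: `4 pd (n+1) = t (n+1) + 3 s(n) r(n)²`, so `pd (n+2) < (4 pd (n+1))³` as soon
as `s(n+1)³ ≤ 9 s(n) r(n)² t(n+1)²`. This follows from the invariant `4s ≤ t ∧ s⁵ ≤ 2r²t³`
of the step map, which holds from level 2 on.

Taking logarithms, `pc (n+1) > 64 pc n³` and `pd (n+1) < 64 pd n³` compare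
`log pc + 3 log 2` and `log pd + 3 log 2` with geometric sequences of ratio 3, since `-3 log 2`
is the fixed point of `x ↦ 3x + 6 log 2`.
-/

open Real

theorem pa_succ (n : ℕ) : pa (n + 1) = (pa n + pb n) ^ 2 * (pa n + 3 * pc n + pd n) := rfl
theorem pb_succ (n : ℕ) : pb (n + 1) = (pa n + pb n) ^ 2 * (pb n + 3 * pc n + pd n) := rfl
theorem pc_succ (n : ℕ) :
    pc (n + 1) = pa n ^ 2 * pb n + pb n ^ 2 * pa n + (3 * pc n + pd n) ^ 3 := rfl
theorem pd_succ (n : ℕ) : pd (n + 1) = pa n ^ 3 + pb n ^ 3 + (3 * pc n + pd n) ^ 3 := rfl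

theorem pa_lt_pb (n : ℕ) : pa n < pb n := by
  induction n with
  | zero => decide
  | succ n ih =>
    rw [pa_succ, pb_succ]
    have : 0 < pa n + pb n := by omega
    gcongr

theorem pb_pos (n : ℕ) : 0 < pb n := (Nat.zero_le _).trans_lt (pa_lt_pb n)

theorem pd_pos (n : ℕ) : 0 < pd n := by
  cases n with
  | zero => decide
  | succ n =>
    rw [pd_succ]
    have := pow_pos (pb_pos n) 3
    omega

theorem pa_pos {n : ℕ} (hn : n ≠ 0) : 0 < pa n := by
  obtain ⟨n, rfl⟩ := Nat.exists_eq_add_one_of_ne_zero hn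
  rw [pa_succ]
  have := pb_pos n
  have := pd_pos n
  positivity

def abSum (n : ℕ) : ℕ := pa n + pb n
def abGap (n : ℕ) : ℕ := pb n - pa n
def cdWeight (n : ℕ) : ℕ := 3 * pc n + pd n

theorem abGap_pos (n : ℕ) : 0 < abGap n := Nat.sub_pos_of_lt (pa_lt_pb n)

theorem abSum_mul_abGap_sq_pos (n : ℕ) : 0 < abSum n * abGap n ^ 2 := by
  have := pb_pos n
  have := abGap_pos n
  unfold abSum
  positivity

theorem pb_eq_pa_add_abGap (n : ℕ) : pb n = pa n + abGap n := by
  have := pa_lt_pb n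
  unfold abGap
  omega

theorem abSum_succ (n : ℕ) : abSum (n + 1) = abSum n ^ 2 * (abSum n + 2 * cdWeight n) := by
  simp only [abSum, cdWeight, pa_succ, pb_succ]
  ring

theorem cdWeight_succ (n : ℕ) : cdWeight (n + 1) = abSum n ^ 3 + 4 * cdWeight n ^ 3 := by
  simp only [abSum, cdWeight, pc_succ, pd_succ]
  ring

theorem abGap_succ (n : ℕ) : abGap (n + 1) = abSum n ^ 2 * abGap n := by
  have h : pb (n + 1) = pa (n + 1) + abSum n ^ 2 * abGap n := by
    rw [pa_succ, pb_succ, abSum, pb_eq_pa_add_abGap n]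
    ring
  rw [abGap, h, Nat.add_sub_cancel_left]

theorem pd_succ_eq_pc_succ_add (n : ℕ) : pd (n + 1) = pc (n + 1) + abSum n * abGap n ^ 2 := by
  rw [pd_succ, pc_succ, abSum, pb_eq_pa_add_abGap n]
  ring

theorem pc_lt_pd {n : ℕ} (hn : n ≠ 0) : pc n < pd n := by
  obtain ⟨n, rfl⟩ := Nat.exists_eq_add_one_of_ne_zero hn
  rw [pd_succ_eq_pc_succ_add]
  have := abSum_mul_abGap_sq_pos n
  omega

theorem pc_le_pd (n : ℕ) : pc n ≤ pd n := by
  cases n with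
  | zero => decide
  | succ n => exact (pc_lt_pd n.succ_ne_zero).le

theorem pc_pos {n : ℕ} (hn : n ≠ 0) : 0 < pc n := by
  obtain ⟨n, rfl⟩ := Nat.exists_eq_add_one_of_ne_zero hn
  rw [pc_succ]
  have := pd_pos n
  positivity

theorem sixtyFour_mul_pc_cube_lt (n : ℕ) : 64 * pc n ^ 3 < pc (n + 1) := by
  rcases Nat.eq_zero_or_pos n with rfl | hn
  · decide
  rw [pc_succ]
  have h4 : 64 * pc n ^ 3 ≤ (3 * pc n + pd n) ^ 3 := by
    calc 64 * pc n ^ 3 = (4 * pc n) ^ 3 := by ring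
      _ ≤ (3 * pc n + pd n) ^ 3 := by have := pc_le_pd n; gcongr; omega
  have : 0 < pa n ^ 2 * pb n := by
    have := pa_pos hn.ne'
    have := pb_pos n
    positivity
  omega

def IceInvariant (s t r : ℕ) : Prop := 4 * s ≤ t ∧ s ^ 5 ≤ 2 * r ^ 2 * t ^ 3

namespace IceInvariant

variable {s t r : ℕ}

theorem step (h : IceInvariant s t r) :
    IceInvariant (s ^ 2 * (s + 2 * t)) (s ^ 3 + 4 * t ^ 3) (s ^ 2 * r) := by
  obtain ⟨hst, hpow⟩ := h
  have h3t : s + 2 * t ≤ 3 * t := by omega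
  constructor
  · calc 4 * (s ^ 2 * (s + 2 * t)) ≤ 4 * (s ^ 2 * (3 * t)) := by gcongr
      _ = 3 * s ^ 2 * (4 * t) := by ring
      _ ≤ t ^ 2 * (4 * t) := by gcongr; nlinarith
      _ ≤ s ^ 3 + 4 * t ^ 3 := by ring_nf; omega
  · refine Nat.le_of_mul_le_mul_left ?_ (by norm_num : 0 < 4)
    calc 4 * (s ^ 2 * (s + 2 * t)) ^ 5 ≤ 4 * (s ^ 2 * (3 * t)) ^ 5 := by gcongr
      _ = 243 * s ^ 5 * (4 * s) * (s ^ 4 * t ^ 5) := by ring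
      _ ≤ 243 * (2 * r ^ 2 * t ^ 3) * t * (s ^ 4 * t ^ 5) := by gcongr
      _ ≤ 4 * (2 * (s ^ 2 * r) ^ 2 * (4 * t ^ 3) ^ 3) := by ring_nf; omega
      _ ≤ 4 * (2 * (s ^ 2 * r) ^ 2 * (s ^ 3 + 4 * t ^ 3) ^ 3) := by gcongr; omega

theorem step_cube_le (h : IceInvariant s t r) :
    (s ^ 2 * (s + 2 * t)) ^ 3 ≤ 9 * (s * r ^ 2) * (s ^ 3 + 4 * t ^ 3) ^ 2 := by
  obtain ⟨hst, hpow⟩ := h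
  calc (s ^ 2 * (s + 2 * t)) ^ 3 ≤ (s ^ 2 * (3 * t)) ^ 3 := by gcongr; omega
    _ = 27 * s * s ^ 5 * t ^ 3 := by ring
    _ ≤ 27 * s * (2 * r ^ 2 * t ^ 3) * t ^ 3 := by gcongr
    _ ≤ 9 * (s * r ^ 2) * (4 * t ^ 3) ^ 2 := by ring_nf; omega
    _ ≤ 9 * (s * r ^ 2) * (s ^ 3 + 4 * t ^ 3) ^ 2 := by gcongr; omega

end IceInvariant

theorem iceInvariant_add_two (n : ℕ) :
    IceInvariant (abSum (n + 2)) (cdWeight (n + 2)) (abGap (n + 2)) := by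
  induction n with
  | zero => exact ⟨by decide, by decide⟩
  | succ n ih =>
    rw [abSum_succ (n + 2), cdWeight_succ (n + 2), abGap_succ (n + 2)]
    exact ih.step

theorem abSum_succ_cube_le (n : ℕ) :
    abSum (n + 1) ^ 3 ≤ 9 * (abSum n * abGap n ^ 2) * cdWeight (n + 1) ^ 2 := by
  match n with
  | 0 | 1 => decide
  | n + 2 =>
    rw [abSum_succ (n + 2), cdWeight_succ (n + 2)]
    exact (iceInvariant_add_two n).step_cube_le

theorem cube_add_cube_add_cube_lt {a b t x : ℕ} (h : (a + b) ^ 3 ≤ 9 * x * t ^ 2) (hx : 0 < x) :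
    a ^ 3 + b ^ 3 + t ^ 3 < (t + 3 * x) ^ 3 := by
  have hab : a ^ 3 + b ^ 3 ≤ (a + b) ^ 3 := by ring_nf; omega
  have : 0 < 27 * x ^ 3 := by positivity
  calc a ^ 3 + b ^ 3 + t ^ 3 ≤ 9 * x * t ^ 2 + t ^ 3 := by omega
    _ < 9 * x * t ^ 2 + t ^ 3 + (27 * x ^ 2 * t + 27 * x ^ 3) := by omega
    _ = (t + 3 * x) ^ 3 := by ring

theorem pd_succ_lt (n : ℕ) : pd (n + 1) < 64 * pd n ^ 3 := by
  cases n with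
  | zero => decide
  | succ n =>
    have h4 : 4 * pd (n + 1) = cdWeight (n + 1) + 3 * (abSum n * abGap n ^ 2) := by
      have := pd_succ_eq_pc_succ_add n
      unfold cdWeight
      omega
    calc pd (n + 1 + 1) < (cdWeight (n + 1) + 3 * (abSum n * abGap n ^ 2)) ^ 3 :=
          cube_add_cube_add_cube_lt (abSum_succ_cube_le n) (abSum_mul_abGap_sq_pos n)
      _ = 64 * pd (n + 1) ^ 3 := by rw [← h4]; ring

theorem log_sixtyFour_mul_cube {y : ℝ} (hy : 0 < y) :
    log (64 * y ^ 3) = 3 * log y + 6 * log 2 := by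
  rw [log_mul (by norm_num) (by positivity), log_pow, show (64 : ℝ) = 2 ^ 6 by norm_num, log_pow]
  push_cast
  ring

theorem three_mul_log_pc_add_lt {n : ℕ} (hn : n ≠ 0) :
    3 * (log (pc n) + 3 * log 2) < log (pc (n + 1)) + 3 * log 2 := by
  have hpos : (0 : ℝ) < pc n := by exact_mod_cast pc_pos hn
  have h := log_lt_log (by positivity)
    (by exact_mod_cast sixtyFour_mul_pc_cube_lt n : 64 * (pc n : ℝ) ^ 3 < pc (n + 1))
  rw [log_sixtyFour_mul_cube hpos] at h
  linarith

theorem log_pd_succ_add_lt (n : ℕ) :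
    log (pd (n + 1)) + 3 * log 2 < 3 * (log (pd n) + 3 * log 2) := by
  have h := log_lt_log (by exact_mod_cast pd_pos (n + 1))
    (by exact_mod_cast pd_succ_lt n : (pd (n + 1) : ℝ) < 64 * (pd n : ℝ) ^ 3)
  rw [log_sixtyFour_mul_cube (by exact_mod_cast pd_pos n)] at h
  linarith

theorem stmt_10 (m n : ℕ) (hm : 1 ≤ m) (hmn : m < n) :
    (3 : ℝ) ^ (n - m) * Real.log (pc m) + 3 * ((3 : ℝ) ^ (n - m) - 1) * Real.log 2 <
        Real.log (pc n) ∧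
    Real.log (pc n) < Real.log (pd n) ∧
    Real.log (pd n) <
      (3 : ℝ) ^ (n - m) * Real.log (pd m) + 3 * ((3 : ℝ) ^ (n - m) - 1) * Real.log 2 := by
  have hc : (3 : ℝ) ^ (n - m) * (log (pc m) + 3 * log 2) < log (pc (m + (n - m))) + 3 * log 2 :=
    geom_lt (u := fun i ↦ log (pc (m + i)) + 3 * log 2) (by norm_num) (by omega)
      fun i _ ↦ three_mul_log_pc_add_lt (by omega)
  have hd : log (pd (m + (n - m))) + 3 * log 2 < (3 : ℝ) ^ (n - m) * (log (pd m) + 3 * log 2) :=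
    lt_geom (u := fun i ↦ log (pd (m + i)) + 3 * log 2) (by norm_num) (by omega)
      fun i _ ↦ log_pd_succ_add_lt (m + i)
  rw [Nat.add_sub_cancel' hmn.le] at hc hd
  have hcd : log (pc n) < log (pd n) :=
    log_lt_log (by exact_mod_cast pc_pos (by omega)) (by exact_mod_cast pc_lt_pd (by omega))
  exact ⟨by linarith, hcd, by linarith⟩
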